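/- arXiv:1103.2415 — 2 statements merged into one kernel-verified Lean document; each statement's English description precedes it below -/
import Mathlib

section
/- For every integer m ≥ 3 and every vertex v of G_{4m+2}, the total domination number of the vertex-deleted graph satisfies γ_t(G_{4m+2} − v) = 2. -/
open SimpleGraph

/-- `S` is a total dominating set of `G`: every vertex of `G` has a neighbor in `S`. -/
def IsTDS {V : Type*} (G : SimpleGraph V) (S : Set V) : Prop :=
  ∀ v : V, ∃ u ∈ S, G.Adj v u

/-- The total domination number `γₜ(G)`: the minimum cardinality of a total dominating set. -/
noncomputable def gammaT {V : Type*} (G : SimpleGraph V) : ℕ :=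
  sInf {n : ℕ | ∃ S : Set V, IsTDS G S ∧ S.ncard = n}

/-- The degree of a vertex. -/
noncomputable def deg {V : Type*} (G : SimpleGraph V) (v : V) : ℕ :=
  (G.neighborSet v).ncard

/-- The maximum degree `Δ(G)`. -/
noncomputable def maxDeg {V : Type*} [Fintype V] (G : SimpleGraph V) : ℕ :=
  Finset.univ.sup fun v => deg G v

/-- The vertex-deleted graph `G − v`. -/
def delVert {V : Type*} (G : SimpleGraph V) (v : V) : SimpleGraph {u : V // u ≠ v} :=
  G.induce {u : V | u ≠ v}

/-- `G` is 3-γₜ-critical: `γₜ(G) = 3` and for every vertex `v` that is not adjacent to a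
vertex of degree one, `γₜ(G − v) = 2`. -/
def IsThreeGammaTCritical {V : Type*} (G : SimpleGraph V) : Prop :=
  gammaT G = 3 ∧
    ∀ v : V, (¬ ∃ u : V, G.Adj v u ∧ deg G u = 1) → gammaT (delVert G v) = 2

/-- Vertices of `G_{4m+2}`: `x, y, z`, `y₁,…,y_{2m−1}` and `z₁,…,z_{2m}`;
`Y i` stands for `y_{i+1}` and `Z i` for `z_{i+1}` (0-based `Fin` indices). -/
inductive V42 (m : ℕ) : Type
  | x : V42 m
  | y : V42 m
  | z : V42 m
  | Y : Fin (2 * m - 1) → V42 m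
  | Z : Fin (2 * m) → V42 m
  deriving DecidableEq, Fintype

/-- Base edge relation of `G_{4m+2}` (the paper's 1-based indices are shifted down by 1):
`x yᵢ`, `x zᵢ`, `y yᵢ`, `y z`, `z zᵢ`, `yᵢ y_{1+((i+m−2) mod (2m−1))}`,
`zᵢ zⱼ` for `i < j`, `j ≠ i + m`, and `yᵢ zⱼ` for `j ≠ i`, `j ≠ i + 1`. -/
def R42 (m : ℕ) : V42 m → V42 m → Prop
  | .x, .Y _ => True
  | .x, .Z _ => True
  | .y, .Y _ => True
  | .y, .z => True
  | .z, .Z _ => True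
  | .Y i, .Y j => j.val = (i.val + m - 1) % (2 * m - 1)
  | .Z i, .Z j => i.val < j.val ∧ j.val ≠ i.val + m
  | .Y i, .Z j => j.val ≠ i.val ∧ j.val ≠ i.val + 1
  | _, _ => False

/-- The graph `G_{4m+2}`. -/
def G42 (m : ℕ) : SimpleGraph (V42 m) := SimpleGraph.fromRel (R42 m)

lemma tds_two {V : Type*} [Finite V] (G : SimpleGraph V) (a b : V)
    (hab : G.Adj a b) (hdom : ∀ u : V, G.Adj u a ∨ G.Adj u b) :
    gammaT G = 2 := by
  have hmem : 2 ∈ {n : ℕ | ∃ S : Set V, IsTDS G S ∧ S.ncard = n} := by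
    refine ⟨{a, b}, fun u => ?_, Set.ncard_pair hab.ne⟩
    rcases hdom u with h | h
    · exact ⟨a, Or.inl rfl, h⟩
    · exact ⟨b, Or.inr rfl, h⟩
  have hub : gammaT G ≤ 2 := Nat.sInf_le hmem
  obtain ⟨S, hS, hcard⟩ := Nat.sInf_mem (⟨2, hmem⟩ :
    Set.Nonempty {n : ℕ | ∃ S : Set V, IsTDS G S ∧ S.ncard = n})
  have h0 : S.ncard ≠ 0 := by
    intro h
    rw [Set.ncard_eq_zero (Set.toFinite S)] at h
    obtain ⟨u, hu, -⟩ := hS a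
    rw [h] at hu
    exact hu
  have h1 : S.ncard ≠ 1 := by
    intro h
    obtain ⟨c, rfl⟩ := Set.ncard_eq_one.mp h
    obtain ⟨u, hu, hadj⟩ := hS c
    rw [Set.mem_singleton_iff] at hu
    subst hu
    exact G.irrefl hadj
  have : S.ncard = gammaT G := hcard
  omega

lemma key {V : Type*} [Finite V] (G : SimpleGraph V) (v : V) (a b : V) (ha : a ≠ v) (hb : b ≠ v)
    (hab : G.Adj a b)
    (hdom : ∀ u : V, u ≠ v → G.Adj u a ∨ G.Adj u b) :
    gammaT (delVert G v) = 2 :=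
  tds_two _ ⟨a, ha⟩ ⟨b, hb⟩ hab fun u => hdom u.1 u.2

lemma adj42 {m : ℕ} {a b : V42 m} (h : a ≠ b) (hr : R42 m a b ∨ R42 m b a) :
    (G42 m).Adj a b := by
  rw [G42, SimpleGraph.fromRel_adj]
  exact ⟨h, hr⟩

lemma Y_ne {m : ℕ} {a b : Fin (2*m-1)} (h : a.val ≠ b.val) : (V42.Y a : V42 m) ≠ V42.Y b := by
  intro e; apply h; injection e with e'; exact congrArg Fin.val e'

lemma Z_ne {m : ℕ} {a b : Fin (2*m)} (h : a.val ≠ b.val) : (V42.Z a : V42 m) ≠ V42.Z b := by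
  intro e; apply h; injection e with e'; exact congrArg Fin.val e'

lemma Y_val_ne {m : ℕ} {a b : Fin (2*m-1)} (h : (V42.Y a : V42 m) ≠ V42.Y b) : a.val ≠ b.val :=
  fun e => h (congrArg V42.Y (Fin.ext e))

lemma Z_val_ne {m : ℕ} {a b : Fin (2*m)} (h : (V42.Z a : V42 m) ≠ V42.Z b) : a.val ≠ b.val :=
  fun e => h (congrArg V42.Z (Fin.ext e))

lemma mod_wrap {a n : ℕ} (h1 : n ≤ a) (h2 : a < 2*n) : a % n = a - n := by
  rw [Nat.mod_eq_sub_mod h1]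
  exact Nat.mod_eq_of_lt (by omega)

lemma YZ_ne {m : ℕ} (a : Fin (2*m-1)) (b : Fin (2*m)) : (V42.Y a : V42 m) ≠ V42.Z b := nofun

lemma ZY_ne {m : ℕ} (a : Fin (2*m)) (b : Fin (2*m-1)) : (V42.Z a : V42 m) ≠ V42.Y b := nofun

/-- Lemma 2.4: `γₜ(G_{4m+2} − v) = 2` for every vertex `v` and every `m ≥ 3`. -/
theorem gammaT_G42_delete (m : ℕ) (hm : 3 ≤ m) (v : V42 m) :
    gammaT (delVert (G42 m) v) = 2 := by
  cases v with
  | x =>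
      refine key _ _ V42.y V42.z ?_ ?_ ?_ ?_
      · exact nofun
      · exact nofun
      · exact adj42 nofun (Or.inl trivial)
      intro u
      cases u with
      | x => exact fun hu => absurd rfl hu
      | y => exact fun _ => Or.inr (adj42 nofun (Or.inl trivial))
      | z => exact fun _ => Or.inl (adj42 nofun (Or.inr trivial))
      | Y l => exact fun _ => Or.inl (adj42 nofun (Or.inr trivial))
      | Z l => exact fun _ => Or.inr (adj42 nofun (Or.inr trivial))
  | y =>
      refine key _ _ V42.x (V42.Z ⟨0, by omega⟩) ?_ ?_ ?_ ?_
      · exact nofun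
      · exact nofun
      · exact adj42 nofun (Or.inl trivial)
      intro u
      cases u with
      | x => exact fun _ => Or.inr (adj42 nofun (Or.inl trivial))
      | y => exact fun hu => absurd rfl hu
      | z => exact fun _ => Or.inr (adj42 nofun (Or.inl trivial))
      | Y l => exact fun _ => Or.inl (adj42 nofun (Or.inr trivial))
      | Z l => exact fun _ => Or.inl (adj42 nofun (Or.inr trivial))
  | z =>
      refine key _ _ V42.x (V42.Y ⟨0, by omega⟩) ?_ ?_ ?_ ?_
      · exact nofun
      · exact nofun
      · exact adj42 nofun (Or.inl trivial)
      intro u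
      cases u with
      | x => exact fun _ => Or.inr (adj42 nofun (Or.inl trivial))
      | y => exact fun _ => Or.inr (adj42 nofun (Or.inl trivial))
      | z => exact fun hu => absurd rfl hu
      | Y l => exact fun _ => Or.inl (adj42 nofun (Or.inr trivial))
      | Z l => exact fun _ => Or.inl (adj42 nofun (Or.inr trivial))
  | Y i =>
      have hi := i.isLt
      by_cases hc : i.val + 2 < m
      · -- recipe 1 : a = Y (i+m-2), b = Z i
        refine key _ _ (V42.Y ⟨i.val + m - 2, by omega⟩) (V42.Z ⟨i.val, by omega⟩) ?_ ?_ ?_ ?_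
        · exact Y_ne (show i.val + m - 2 ≠ i.val by omega)
        · exact nofun
        · exact adj42 nofun (Or.inl ⟨show i.val ≠ i.val + m - 2 by omega,
            show i.val ≠ i.val + m - 2 + 1 by omega⟩)
        intro u
        cases u with
        | x => exact fun _ => Or.inl (adj42 nofun (Or.inl trivial))
        | y => exact fun _ => Or.inl (adj42 nofun (Or.inl trivial))
        | z => exact fun _ => Or.inr (adj42 nofun (Or.inl trivial))
        | Y l =>
            intro hu
            have hne : l.val ≠ i.val := Y_val_ne hu
            have hl2 := l.isLt
            by_cases hl : l.val + 1 = i.val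
            · refine Or.inl (adj42 (Y_ne (show l.val ≠ i.val + m - 2 by omega))
                (Or.inl ?_))
              show i.val + m - 2 = (l.val + m - 1) % (2*m-1)
              rw [Nat.mod_eq_of_lt (by omega)]
              omega
            · exact Or.inr (adj42 nofun (Or.inl ⟨show i.val ≠ l.val from fun h => hne h.symm,
                show i.val ≠ l.val + 1 from fun h => hl h.symm⟩))
        | Z l =>
            intro _
            have hl2 := l.isLt
            by_cases hl : l.val = i.val + m - 2 ∨ l.val = i.val + m - 1
            · refine Or.inr (adj42 (Z_ne (show l.val ≠ i.val by omega))
                (Or.inr ⟨show i.val < l.val by omega, show l.val ≠ i.val + m by omega⟩))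
            · push_neg at hl
              exact Or.inl (adj42 nofun
                (Or.inr ⟨show l.val ≠ i.val + m - 2 from hl.1,
                  show l.val ≠ i.val + m - 2 + 1 by omega⟩))
      · -- recipe 2 : a = Y (i+2-m), b = Z (i+1)
        refine key _ _ (V42.Y ⟨i.val + 2 - m, by omega⟩) (V42.Z ⟨i.val + 1, by omega⟩) ?_ ?_ ?_ ?_
        · exact Y_ne (show i.val + 2 - m ≠ i.val by omega)
        · exact nofun
        · exact adj42 nofun (Or.inl ⟨show i.val + 1 ≠ i.val + 2 - m by omega,
            show i.val + 1 ≠ i.val + 2 - m + 1 by omega⟩)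
        intro u
        cases u with
        | x => exact fun _ => Or.inl (adj42 nofun (Or.inl trivial))
        | y => exact fun _ => Or.inl (adj42 nofun (Or.inl trivial))
        | z => exact fun _ => Or.inr (adj42 nofun (Or.inl trivial))
        | Y l =>
            intro hu
            have hne : l.val ≠ i.val := Y_val_ne hu
            have hl2 := l.isLt
            by_cases hl : l.val = i.val + 1
            · refine Or.inl (adj42 (Y_ne (show l.val ≠ i.val + 2 - m by omega))
                (Or.inr ?_))
              show l.val = (i.val + 2 - m + m - 1) % (2*m-1)
              rw [Nat.mod_eq_of_lt (by omega)]
              omega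
            · exact Or.inr (adj42 nofun (Or.inl ⟨show i.val + 1 ≠ l.val from
                fun h => hl h.symm, show i.val + 1 ≠ l.val + 1 by omega⟩))
        | Z l =>
            intro _
            have hl2 := l.isLt
            by_cases hl : l.val = i.val + 2 - m ∨ l.val = i.val + 2 - m + 1
            · refine Or.inr (adj42 (Z_ne (show l.val ≠ i.val + 1 by omega))
                (Or.inl ⟨show l.val < i.val + 1 by omega,
                  show i.val + 1 ≠ l.val + m by omega⟩))
            · push_neg at hl
              exact Or.inl (adj42 nofun
                (Or.inr ⟨show l.val ≠ i.val + 2 - m from hl.1,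
                  show l.val ≠ i.val + 2 - m + 1 from hl.2⟩))
  | Z t =>
      have ht := t.isLt
      by_cases hc : m ≤ t.val
      · -- recipe A : a = Y (t-1), b = Z (t-m)
        refine key _ _ (V42.Y ⟨t.val - 1, by omega⟩) (V42.Z ⟨t.val - m, by omega⟩) ?_ ?_ ?_ ?_
        · exact nofun
        · exact Z_ne (show t.val - m ≠ t.val by omega)
        · exact adj42 nofun (Or.inl ⟨show t.val - m ≠ t.val - 1 by omega,
            show t.val - m ≠ t.val - 1 + 1 by omega⟩)
        intro u
        cases u with
        | x => exact fun _ => Or.inl (adj42 nofun (Or.inl trivial))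
        | y => exact fun _ => Or.inl (adj42 nofun (Or.inl trivial))
        | z => exact fun _ => Or.inr (adj42 nofun (Or.inl trivial))
        | Y l =>
            intro _
            have hl2 := l.isLt
            by_cases hl : l.val = t.val - m
            · refine Or.inl (adj42 (Y_ne (show l.val ≠ t.val - 1 by omega))
                (Or.inl ?_))
              show t.val - 1 = (l.val + m - 1) % (2*m-1)
              rw [Nat.mod_eq_of_lt (by omega)]
              omega
            · by_cases hl' : l.val + 1 = t.val - m
              · refine Or.inl (adj42 (Y_ne (show l.val ≠ t.val - 1 by omega))
                  (Or.inr ?_))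
                show l.val = (t.val - 1 + m - 1) % (2*m-1)
                rw [mod_wrap (by omega) (by omega)]
                omega
              · exact Or.inr (adj42 nofun (Or.inl ⟨show t.val - m ≠ l.val from
                  fun h => hl h.symm, show t.val - m ≠ l.val + 1 from fun h => hl' h.symm⟩))
        | Z l =>
            intro hu
            have hne : l.val ≠ t.val := Z_val_ne hu
            have hl2 := l.isLt
            by_cases hl : l.val = t.val - 1
            · refine Or.inr (adj42 (Z_ne (show l.val ≠ t.val - m by omega))
                (Or.inr ⟨show t.val - m < l.val by omega,
                  show l.val ≠ t.val - m + m by omega⟩))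
            · exact Or.inl (adj42 nofun
                (Or.inr ⟨show l.val ≠ t.val - 1 from hl,
                  show l.val ≠ t.val - 1 + 1 by omega⟩))
      · -- recipe B : a = Y t, b = Z (t+m)
        refine key _ _ (V42.Y ⟨t.val, by omega⟩) (V42.Z ⟨t.val + m, by omega⟩) ?_ ?_ ?_ ?_
        · exact nofun
        · exact Z_ne (show t.val + m ≠ t.val by omega)
        · exact adj42 nofun (Or.inl ⟨show t.val + m ≠ t.val by omega,
            show t.val + m ≠ t.val + 1 by omega⟩)
        intro u
        cases u with
        | x => exact fun _ => Or.inl (adj42 nofun (Or.inl trivial))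
        | y => exact fun _ => Or.inl (adj42 nofun (Or.inl trivial))
        | z => exact fun _ => Or.inr (adj42 nofun (Or.inl trivial))
        | Y l =>
            intro _
            have hl2 := l.isLt
            by_cases hl : l.val = t.val + m - 1
            · refine Or.inl (adj42 (Y_ne (show l.val ≠ t.val by omega))
                (Or.inr ?_))
              show l.val = (t.val + m - 1) % (2*m-1)
              rw [Nat.mod_eq_of_lt (by omega)]
              omega
            · by_cases hl' : l.val = t.val + m
              · refine Or.inl (adj42 (Y_ne (show l.val ≠ t.val by omega))
                  (Or.inl ?_))
                show t.val = (l.val + m - 1) % (2*m-1)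
                rw [mod_wrap (by omega) (by omega)]
                omega
              · exact Or.inr (adj42 nofun (Or.inl ⟨show t.val + m ≠ l.val from
                  fun h => hl' h.symm, show t.val + m ≠ l.val + 1 by omega⟩))
        | Z l =>
            intro hu
            have hne : l.val ≠ t.val := Z_val_ne hu
            have hl2 := l.isLt
            by_cases hl : l.val = t.val + 1
            · refine Or.inr (adj42 (Z_ne (show l.val ≠ t.val + m by omega))
                (Or.inl ⟨show l.val < t.val + m by omega,
                  show t.val + m ≠ l.val + m by omega⟩))
            · exact Or.inl (adj42 nofun
                (Or.inr ⟨show l.val ≠ t.val from hne,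
                  show l.val ≠ t.val + 1 from hl⟩))
end

section
/- For every integer m ≥ 3, the total domination number of the graph G_{4m} equals 3, i.e., γ_t(G_{4m}) = 3. -/
open SimpleGraph

/-- Vertices of `G_{4m}`: `x, y, z`, `y₁,…,y_{2m−2}` and `z₁,…,z_{2m−1}`;
`Y i` stands for `y_{i+1}` and `Z i` for `z_{i+1}` (0-based `Fin` indices). -/
inductive V40 (m : ℕ) : Type
  | x : V40 m
  | y : V40 m
  | z : V40 m
  | Y : Fin (2 * m - 2) → V40 m
  | Z : Fin (2 * m - 1) → V40 m
  deriving DecidableEq, Fintype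

/-- Base edge relation of `G_{4m}` (the paper's 1-based indices are shifted down by 1):
`x yᵢ`, `x zᵢ`, `y yᵢ`, `y z`, `z zᵢ`, `yᵢ yⱼ` for `i < j`, `j ≠ i + m − 1`,
`zᵢ z_{1+((i+m−2) mod (2m−1))}`, `yᵢ zⱼ` for `j ≠ i`, `j ≠ i + 1`, and the extra edge `y₁ z₂`. -/
def R40 (m : ℕ) : V40 m → V40 m → Prop
  | .x, .Y _ => True
  | .x, .Z _ => True
  | .y, .Y _ => True
  | .y, .z => True
  | .z, .Z _ => True
  | .Y i, .Y j => i.val < j.val ∧ j.val ≠ i.val + m - 1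
  | .Z i, .Z j => j.val = (i.val + m - 1) % (2 * m - 1)
  | .Y i, .Z j => (j.val ≠ i.val ∧ j.val ≠ i.val + 1) ∨ (i.val = 0 ∧ j.val = 1)
  | _, _ => False

/-- The graph `G_{4m}`. -/
def G40 (m : ℕ) : SimpleGraph (V40 m) := SimpleGraph.fromRel (R40 m)

/-! Every total dominating set contains a neighbour of `y` (which is `z` or some `yᵢ`) and a
neighbour of `z` (which is `y` or some `zⱼ`); these are distinct, so a total dominating set of
size at most two is exactly such a pair. Each of the four kinds of pair misses a vertex; for
`{yᵢ, zⱼ}` the missed vertex is found among `zᵢ`, `zᵢ₊₁` and `y_{i ± (m−1)}`, because the `z`'s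
form the circulant graph in which `zᵢ ~ zⱼ` iff `|i − j| ∈ {m − 1, m}`. Conversely `{y, z, y₁}`
is a total dominating set. -/

section TotalDomination

variable {V : Type*} {G : SimpleGraph V}

theorem IsTDS.pair_of_ncard_le_two {S : Set V} (hS : IsTDS G S) (hfin : S.Finite)
    (hcard : S.ncard ≤ 2) {p q : V} (hp : p ∈ S) (hq : q ∈ S) (hpq : p ≠ q) :
    IsTDS G {p, q} := by
  have hsub : ({p, q} : Set V) ⊆ S := Set.insert_subset hp (Set.singleton_subset_iff.2 hq)
  rwa [Set.eq_of_subset_of_ncard_le hsub (by rwa [Set.ncard_pair hpq]) hfin]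

theorem isTDS_pair_iff {p q : V} : IsTDS G {p, q} ↔ ∀ w, G.Adj w p ∨ G.Adj w q := by
  simp [IsTDS]

theorem three_le_ncard_of_isTDS [Finite V] {y z : V}
    (hdisj : ∀ p, G.Adj y p → ¬ G.Adj z p)
    (hpair : ∀ p q, G.Adj y p → G.Adj z q → ¬ IsTDS G {p, q})
    {S : Set V} (hS : IsTDS G S) : 3 ≤ S.ncard := by
  by_contra! hlt
  obtain ⟨p, hp, hyp⟩ := hS y
  obtain ⟨q, hq, hzq⟩ := hS z
  have hpq : p ≠ q := by rintro rfl; exact hdisj p hyp hzq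
  exact hpair p q hyp hzq (hS.pair_of_ncard_le_two S.toFinite (by omega) hp hq hpq)

theorem gammaT_eq_of_isTDS {S : Set V} {n : ℕ} (hS : IsTDS G S) (hcard : S.ncard = n)
    (hmin : ∀ T : Set V, IsTDS G T → n ≤ T.ncard) : gammaT G = n :=
  le_antisymm (Nat.sInf_le ⟨S, hS, hcard⟩) (le_csInf ⟨n, S, hS, hcard⟩ fun _ ⟨T, hT, hTn⟩ =>
    hTn ▸ hmin T hT)

end TotalDomination

theorem Nat.mod_eq_of_lt_two_mul {t n : ℕ} (h : t < 2 * n) :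
    (t < n ∧ t % n = t) ∨ (n ≤ t ∧ t % n = t - n) := by
  rcases lt_or_ge t n with htn | hnt
  · exact Or.inl ⟨htn, Nat.mod_eq_of_lt htn⟩
  · exact Or.inr ⟨hnt, by rw [Nat.mod_eq_sub_mod hnt, Nat.mod_eq_of_lt (by omega)]⟩

namespace G40

variable {m : ℕ}

open V40

theorem adj_Y_Z_iff {i : Fin (2 * m - 2)} {j : Fin (2 * m - 1)} :
    (G40 m).Adj (Y i) (Z j) ↔ (j.val ≠ i ∧ j.val ≠ i + 1) ∨ (i.val = 0 ∧ j.val = 1) := by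
  simp [G40, R40]

theorem adj_Y_Y_iff (hm : 1 ≤ m) {i j : Fin (2 * m - 2)} :
    (G40 m).Adj (Y i) (Y j) ↔ i.val ≠ j ∧ i.val + (m - 1) ≠ j ∧ j.val + (m - 1) ≠ i := by
  simp only [G40, R40, fromRel_adj, ne_eq, Y.injEq, Fin.ext_iff]
  omega

theorem adj_Z_Z_iff (hm : 2 ≤ m) {i j : Fin (2 * m - 1)} :
    (G40 m).Adj (Z i) (Z j) ↔
      i.val + (m - 1) = j ∨ j.val + (m - 1) = i ∨ i.val + m = j ∨ j.val + m = i := by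
  simp only [G40, R40, fromRel_adj, ne_eq, Z.injEq, Fin.ext_iff]
  have hi := Nat.mod_eq_of_lt_two_mul (t := i + m - 1) (n := 2 * m - 1) (by omega)
  have hj := Nat.mod_eq_of_lt_two_mul (t := j + m - 1) (n := 2 * m - 1) (by omega)
  omega

theorem isTDS_y_z_Y_zero (hm : 2 ≤ m) : IsTDS (G40 m) {y, z, Y ⟨0, by omega⟩} := by
  intro v
  cases v <;> simp [G40, R40]

theorem ncard_y_z_Y_zero (hm : 2 ≤ m) : ({y, z, Y ⟨0, by omega⟩} : Set (V40 m)).ncard = 3 := by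
  rw [Set.ncard_insert_of_notMem (by simp), Set.ncard_pair (by simp)]

theorem not_adj_z_of_adj_y {p : V40 m} (hp : (G40 m).Adj y p) : ¬ (G40 m).Adj z p := by
  cases p <;> simp_all [G40, R40]

theorem not_isTDS_z_y : ¬ IsTDS (G40 m) {z, y} := fun h => by
  simpa [G40, R40] using isTDS_pair_iff.1 h x

theorem not_isTDS_z_Z (hm : 2 ≤ m) (b : Fin (2 * m - 1)) : ¬ IsTDS (G40 m) {z, Z b} := fun h => by
  have hdom := (isTDS_pair_iff.1 h (Y ⟨min b (2 * m - 3), by omega⟩)).resolve_left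
    (by simp [G40, R40])
  simp only [adj_Y_Z_iff] at hdom
  omega

theorem not_isTDS_Y_y (a : Fin (2 * m - 2)) : ¬ IsTDS (G40 m) {Y a, y} := fun h => by
  have hdom := (isTDS_pair_iff.1 h (Z ⟨a, by omega⟩)).resolve_right (by simp [G40, R40])
  simp only [(G40 m).adj_comm (Z _), adj_Y_Z_iff] at hdom
  omega

theorem not_isTDS_Y_Z (hm : 3 ≤ m) (a : Fin (2 * m - 2)) (b : Fin (2 * m - 1)) :
    ¬ IsTDS (G40 m) {Y a, Z b} := fun h => by
  have hZ (c : ℕ) (hc : c < 2 * m - 1) := isTDS_pair_iff.1 h (Z ⟨c, hc⟩)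
  have hY (c : ℕ) (hc : c < 2 * m - 2) := isTDS_pair_iff.1 h (Y ⟨c, hc⟩)
  simp only [(G40 m).adj_comm (Z _) (Y a), adj_Y_Z_iff, adj_Z_Z_iff (by omega : 2 ≤ m),
    adj_Y_Y_iff (by omega : 1 ≤ m)] at hZ hY
  rcases Nat.eq_zero_or_pos a.val with ha | ha
  · have hZ₀ := hZ 0 (by omega)
    have hY' := hY (m - 1) (by omega)
    omega
  · -- `yₐ` misses `zₐ` and `zₐ₊₁`, so `z_b` dominates both: `b = a + m` or `b + (m - 1) = a`
    have hZa := hZ a (by omega)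
    have hZa' := hZ (a + 1) (by omega)
    rcases le_or_gt a.val (m - 2) with hle | hgt
    · have hY' := hY (a + (m - 1)) (by omega)
      omega
    · have hY' := hY (a - (m - 1)) (by omega)
      omega

theorem not_isTDS_of_adj (hm : 3 ≤ m) {p q : V40 m} (hp : (G40 m).Adj y p)
    (hq : (G40 m).Adj z q) : ¬ IsTDS (G40 m) {p, q} := by
  cases p <;> cases q <;> simp [G40, R40] at hp hq
  · exact not_isTDS_z_y
  · exact not_isTDS_z_Z (by omega) _
  · exact not_isTDS_Y_y _
  · exact not_isTDS_Y_Z hm _ _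

end G40

/-- Lemma 2.6: `γₜ(G_{4m}) = 3` for every `m ≥ 3`. -/
theorem gammaT_G40 (m : ℕ) (hm : 3 ≤ m) : gammaT (G40 m) = 3 :=
  gammaT_eq_of_isTDS (G40.isTDS_y_z_Y_zero (by omega)) (G40.ncard_y_z_Y_zero (by omega))
    fun _ hT => three_le_ncard_of_isTDS (fun _ => G40.not_adj_z_of_adj_y)
      (fun _ _ => G40.not_isTDS_of_adj hm) hT
end
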